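/- Well-definedness of next(c): for every valid, non-final, non-initial configuration c = (z, σ, t) with z even, left(c) is nonempty — in particular the unique bracket of t_G with span (0, n) belongs to left(c) — and hence next(c), the ≺-minimal element of left(c), exists. -/

import Mathlib

/-!
Formalization of the span-based Structure/Label transition parsing system of
Cross & Huang (2016), "Span-Based Constituency Parsing with a Structure-Label
System and Provably Optimal Dynamic Oracles".

A configuration is `(z, σ, t)` where `z` is the step number, `σ` the stack of
span boundaries and `t` the set of brackets built so far.  A bracket is a
triple `(X, i, j)` with `X` a nonterminal label and `i < j ≤ n` a span.
-/

namespace SpanParser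

structure Config (N : Type*) where
  z : ℕ
  σ : List ℕ
  t : Finset (N × ℕ × ℕ)

variable {N : Type*}

/-- The span of a bracket. -/
def span (b : N × ℕ × ℕ) : ℕ × ℕ := b.2

/-- Top (rightmost) boundary of the stack. -/
def topJ (σ : List ℕ) : ℕ := σ.getLastD 0

/-- Second-to-top boundary of the stack. -/
def topI (σ : List ℕ) : ℕ := σ.dropLast.getLastD 0

/-- Parser actions: shift, combine, label-`X`, and nolabel. -/
inductive Action (N : Type*) where
  | sh : Action N
  | comb : Action N
  | label : N → Action N
  | nolabel : Action N

variable [DecidableEq N]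

/-- Applicability of an action at a configuration (for sentence length `n`). -/
def App (n : ℕ) (c : Config N) : Action N → Prop
  | .sh      => Even c.z ∧ c.σ ≠ [] ∧ topJ c.σ < n
  | .comb    => Even c.z ∧ 3 ≤ c.σ.length
  | .label _ => Odd c.z ∧ 2 ≤ c.σ.length
  | .nolabel => Odd c.z ∧ 2 ≤ c.σ.length ∧ c.z < 4 * n - 1

/-- The result `τ(c)` of applying action `τ` to configuration `c`. -/
def doAct (c : Config N) : Action N → Config N
  | .sh      => ⟨c.z + 1, c.σ ++ [topJ c.σ + 1], c.t⟩
  | .comb    => ⟨c.z + 1, c.σ.dropLast.dropLast ++ [topJ c.σ], c.t⟩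
  | .label X => ⟨c.z + 1, c.σ, insert (X, topI c.σ, topJ c.σ) c.t⟩
  | .nolabel => ⟨c.z + 1, c.σ, c.t⟩

/-- The initial configuration `(0, [0], ∅)`. -/
def initial (N : Type*) : Config N := ⟨0, [0], ∅⟩

/-- One transition step `c ⊢ c'`. -/
def Step (n : ℕ) (c c' : Config N) : Prop := ∃ a, App n c a ∧ c' = doAct c a

/-- `⊢*`: reflexive-transitive closure of the transition relation. -/
def Reaches (n : ℕ) : Config N → Config N → Prop := Relation.ReflTransGen (Step n)

/-- A configuration is valid if it is reachable from the initial configuration. -/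
def Valid (n : ℕ) (c : Config N) : Prop := Reaches n (initial N) c

/-- A final configuration: `σ = [0, n]` and `z = 4n - 2`. -/
def Final (n : ℕ) (c : Config N) : Prop := c.σ = [0, n] ∧ c.z = 4 * n - 2

/-- `D(c)`: the set of trees of final configurations reachable from `c`. -/
def Dset (n : ℕ) (c : Config N) : Set (Finset (N × ℕ × ℕ)) :=
  {t' | ∃ c', Reaches n c c' ∧ Final n c' ∧ c'.t = t'}

/-- `(i,j) ⪯ (p,q)`: span `(i,j)` is encompassed by `(p,q)`, i.e. `p ≤ i < j ≤ q`. -/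
def Enc (s₁ s₂ : ℕ × ℕ) : Prop := s₂.1 ≤ s₁.1 ∧ s₁.1 < s₁.2 ∧ s₁.2 ≤ s₂.2

/-- `(i,j) ≺ (p,q)`: strict encompassment. -/
def SEnc (s₁ s₂ : ℕ × ℕ) : Prop := Enc s₁ s₂ ∧ s₁ ≠ s₂

/-- `tG` is a gold tree for sentence length `n`: valid spans, pairwise-distinct
spans, pairwise non-crossing spans, and exactly one bracket with span `(0, n)`
(uniqueness follows from distinctness of spans). -/
structure IsGold (n : ℕ) (tG : Finset (N × ℕ × ℕ)) : Prop where
  validSpans : ∀ b ∈ tG, (span b).1 < (span b).2 ∧ (span b).2 ≤ n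
  distinctSpans : ∀ b₁ ∈ tG, ∀ b₂ ∈ tG, span b₁ = span b₂ → b₁ = b₂
  noncrossing : ∀ b₁ ∈ tG, ∀ b₂ ∈ tG,
    Enc (span b₁) (span b₂) ∨ Enc (span b₂) (span b₁) ∨
    (span b₁).2 ≤ (span b₂).1 ∨ (span b₂).2 ≤ (span b₁).1
  root : ∃ X, (X, 0, n) ∈ tG

open Classical in
/-- `left(c)`: gold brackets (strictly, at even steps) encompassing the top
span whose left boundary occurs on the stack. -/
noncomputable def leftSet (tG : Finset (N × ℕ × ℕ)) (c : Config N) :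
    Finset (N × ℕ × ℕ) :=
  tG.filter fun b =>
    (if Even c.z then SEnc (topI c.σ, topJ c.σ) (span b)
     else Enc (topI c.σ, topJ c.σ) (span b)) ∧ (span b).1 ∈ c.σ

open Classical in
/-- `right(c)`: gold brackets entirely on the queue. -/
noncomputable def rightSet (tG : Finset (N × ℕ × ℕ)) (c : Config N) :
    Finset (N × ℕ × ℕ) :=
  tG.filter fun b => topJ c.σ ≤ (span b).1

open Classical in
/-- `reach(c)`: the reachable gold brackets (all of `t_G` at the initial
configuration, whose stack has fewer than two boundaries). -/
noncomputable def reach (tG : Finset (N × ℕ × ℕ)) (c : Config N) :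
    Finset (N × ℕ × ℕ) :=
  if c.σ.length < 2 then tG else leftSet tG c ∪ rightSet tG c

/-- The optimal tree `t*(c) = t ∪ reach(c)`. -/
noncomputable def tstar (tG : Finset (N × ℕ × ℕ)) (c : Config N) :
    Finset (N × ℕ × ℕ) :=
  c.t ∪ reach tG c

/-- `b = next(c)`: the `≺`-minimal element of `left(c)`. -/
def IsNext (tG : Finset (N × ℕ × ℕ)) (c : Config N) (b : N × ℕ × ℕ) : Prop :=
  b ∈ leftSet tG c ∧ ∀ b' ∈ leftSet tG c, Enc (span b) (span b')

/-- The dynamic-oracle policy `dyna(c)` as a predicate on actions. -/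
def Dyna (tG : Finset (N × ℕ × ℕ)) (c : Config N) (a : Action N) : Prop :=
  if c.σ.length < 2 then a = Action.sh
  else if Even c.z then
    ∃ b, IsNext tG c b ∧
      (((span b).1 = topI c.σ ∧ topJ c.σ < (span b).2 ∧ a = Action.sh) ∨
       ((span b).1 < topI c.σ ∧ (span b).2 = topJ c.σ ∧ a = Action.comb) ∨
       ((span b).1 < topI c.σ ∧ topJ c.σ < (span b).2 ∧
          (a = Action.sh ∨ a = Action.comb)))
  else
    (∃ X, (X, topI c.σ, topJ c.σ) ∈ tG ∧ a = Action.label X) ∨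
    ((∀ X, (X, topI c.σ, topJ c.σ) ∉ tG) ∧ a = Action.nolabel)

/-- `F1` of a predicted bracket set `t'` against the gold tree `tG`
(`0` when `t' ∩ tG = ∅`). -/
noncomputable def f1 (tG t' : Finset (N × ℕ × ℕ)) : ℝ :=
  if t' ∩ tG = ∅ then 0
  else
    (2 * (((t' ∩ tG).card : ℝ) / (tG.card : ℝ)) * (((t' ∩ tG).card : ℝ) / (t'.card : ℝ))) /
      ((((t' ∩ tG).card : ℝ) / (tG.card : ℝ)) + (((t' ∩ tG).card : ℝ) / (t'.card : ℝ)))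

/-- `F1(c)`: the best `F1` among trees reachable from `c`. -/
noncomputable def configF1 (n : ℕ) (tG : Finset (N × ℕ × ℕ)) (c : Config N) : ℝ :=
  sSup (f1 tG '' Dset n c)

/-- A run of (applicable) actions from one configuration to another. -/
inductive Run (n : ℕ) : Config N → List (Action N) → Config N → Prop
  | refl (c : Config N) : Run n c [] c
  | step {c c' : Config N} {as : List (Action N)} (a : Action N)
      (happ : App n c a) (h : Run n (doAct c a) as c') : Run n c (a :: as) c'

/-- A run all of whose actions follow the dynamic oracle. -/
inductive DynaRun (n : ℕ) (tG : Finset (N × ℕ × ℕ)) : Config N → Config N → Prop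
  | refl (c : Config N) : DynaRun n tG c c
  | step {c c' : Config N} (a : Action N) (happ : App n c a) (hdyna : Dyna tG c a)
      (h : DynaRun n tG (doAct c a) c') : DynaRun n tG c c'

def isSh : Action N → Bool
  | .sh => true
  | _ => false

def isComb : Action N → Bool
  | .comb => true
  | _ => false

/-- Label-step actions: `label-X` or `nolabel`. -/
def isLabelStep : Action N → Bool
  | .label _ => true
  | .nolabel => true
  | _ => false

/-!
Every valid configuration has a strictly increasing stack containing `0`, bounded by `n`, and
satisfies the step count `z + 2|σ| + (z mod 2) = 4 j + 2` for its top boundary `j`. At an even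
step the top span can thus be `(0, n)` only in the final configuration, so otherwise the root
bracket strictly encompasses it and lies in `left(c)`. All members of `left(c)` encompass the
top span, hence by non-crossing they are nested, and the one of least width is `next(c)`.
-/

lemma topJ_append_singleton (l : List ℕ) (x : ℕ) : topJ (l ++ [x]) = x :=
  List.getLastD_concat

lemma topJ_append_pair (l : List ℕ) (i j : ℕ) : topJ (l ++ [i, j]) = j := by
  simp [topJ]

lemma topI_append_pair (l : List ℕ) (i j : ℕ) : topI (l ++ [i, j]) = i := by
  simp [topI]

lemma exists_eq_append_pair {σ : List ℕ} (h : 2 ≤ σ.length) : ∃ l i j, σ = l ++ [i, j] := by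
  rcases σ.eq_nil_or_concat with rfl | ⟨l₁, j, rfl⟩
  · simp at h
  rcases l₁.eq_nil_or_concat with rfl | ⟨l, i, rfl⟩
  · simp at h
  exact ⟨l, i, j, by simp⟩

lemma le_topJ_of_pairwise {σ : List ℕ} (hs : σ.Pairwise (· < ·)) {x : ℕ} (hx : x ∈ σ) :
    x ≤ topJ σ := by
  obtain ⟨l, j, rfl⟩ := σ.eq_nil_or_concat.resolve_left (List.ne_nil_of_mem hx)
  rw [List.concat_eq_append, List.pairwise_append] at hs
  rw [List.concat_eq_append, List.mem_append, List.mem_singleton] at hx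
  rw [List.concat_eq_append, topJ_append_singleton]
  rcases hx with hx | rfl
  · exact (hs.2.2 x hx j (List.mem_singleton_self j)).le
  · exact le_rfl

omit [DecidableEq N] in
structure ValidInv (n : ℕ) (c : Config N) : Prop where
  zero_mem : 0 ∈ c.σ
  sorted : c.σ.Pairwise (· < ·)
  le : ∀ x ∈ c.σ, x ≤ n
  step_count : c.z + 2 * c.σ.length + c.z % 2 = 4 * topJ c.σ + 2
  initial_or_two_le : c = initial N ∨ 2 ≤ c.σ.length

namespace ValidInv

variable {n : ℕ} {c : Config N}

omit [DecidableEq N] in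
lemma initial : ValidInv n (initial N) where
  zero_mem := by simp [SpanParser.initial]
  sorted := by simp [SpanParser.initial]
  le := by simp [SpanParser.initial]
  step_count := by simp [SpanParser.initial, topJ]
  initial_or_two_le := Or.inl rfl

lemma doAct_sh (h : ValidInv n c) (happ : App n c .sh) : ValidInv n (doAct c .sh) := by
  obtain ⟨hz, -, hlt⟩ := happ
  have hz2 : c.z % 2 = 0 := Nat.even_iff.mp hz
  have hstep := h.step_count
  refine ⟨List.mem_append_left _ h.zero_mem, ?_, ?_, ?_, Or.inr ?_⟩
  · simpa [doAct, List.pairwise_append] using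
      ⟨h.sorted, fun x hx => le_topJ_of_pairwise h.sorted hx⟩
  · intro x hx
    simp only [doAct, List.mem_append, List.mem_singleton] at hx
    rcases hx with hx | rfl
    exacts [h.le x hx, hlt]
  · simp only [doAct, topJ_append_singleton, List.length_append, List.length_singleton]
    omega
  · have := List.length_pos_of_mem h.zero_mem
    simp only [doAct, List.length_append, List.length_singleton]
    omega

lemma doAct_comb (h : ValidInv n c) (happ : App n c .comb) : ValidInv n (doAct c .comb) := by
  obtain ⟨hz, hlen⟩ := happ
  obtain ⟨L, i, j, hσ⟩ := exists_eq_append_pair (σ := c.σ) (by omega)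
  have hL : L ≠ [] := by rintro rfl; simp [hσ] at hlen
  have hσ' : (doAct c .comb).σ = L ++ [j] := by simp [doAct, hσ, topJ_append_pair]
  have hsub : (L ++ [j]).Sublist c.σ :=
    hσ ▸ (List.Sublist.cons _ (List.Sublist.refl _)).append_left L
  have hsorted := h.sorted
  rw [hσ, List.pairwise_append] at hsorted
  have hz2 : c.z % 2 = 0 := Nat.even_iff.mp hz
  have hstep := h.step_count
  rw [hσ, topJ_append_pair] at hstep
  refine ⟨?_, hσ' ▸ h.sorted.sublist hsub, hσ' ▸ fun x hx => h.le x (hsub.subset hx), ?_,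
    Or.inr ?_⟩
  · -- `0` is not `i`, since the boundaries in `L` lie below `i`
    obtain ⟨x, hx⟩ := List.exists_mem_of_ne_nil L hL
    have hxi := hsorted.2.2 x hx i (by simp)
    have h0 := h.zero_mem
    rw [hσ] at h0
    rw [hσ']
    simp only [List.mem_append, List.mem_cons, List.not_mem_nil, or_false] at h0 ⊢
    rcases h0 with h0 | rfl | rfl
    exacts [Or.inl h0, absurd hxi (Nat.not_lt_zero x), Or.inr rfl]
  · rw [hσ', topJ_append_singleton]
    simp only [doAct, List.length_append, List.length_cons, List.length_nil] at hstep ⊢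
    omega
  · have := List.length_pos_of_ne_nil hL
    simp only [hσ', List.length_append, List.length_singleton]
    omega

lemma step {c' : Config N} (h : ValidInv n c) (hs : Step n c c') : ValidInv n c' := by
  obtain ⟨a, happ, rfl⟩ := hs
  have hstep := h.step_count
  cases a with
  | sh => exact h.doAct_sh happ
  | comb => exact h.doAct_comb happ
  | label X =>
    have := Nat.odd_iff.mp happ.1
    exact ⟨h.zero_mem, h.sorted, h.le, by simp only [doAct]; omega, Or.inr happ.2⟩
  | nolabel =>
    have := Nat.odd_iff.mp happ.1
    exact ⟨h.zero_mem, h.sorted, h.le, by simp only [doAct]; omega, Or.inr happ.2.1⟩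

lemma of_valid (hc : Valid n c) : ValidInv n c :=
  Relation.ReflTransGen.rec ValidInv.initial (fun _ hs h => h.step hs) hc

omit [DecidableEq N] in
lemma top_enc_root (h : ValidInv n c) (hlen : 2 ≤ c.σ.length) :
    Enc (topI c.σ, topJ c.σ) (0, n) := by
  obtain ⟨L, i, j, hσ⟩ := exists_eq_append_pair hlen
  have hsorted := h.sorted
  rw [hσ, List.pairwise_append] at hsorted
  have hij : i < j := by simpa using hsorted.2.1
  have hjn : j ≤ n := h.le j (by simp [hσ])
  simp only [Enc, hσ, topI_append_pair, topJ_append_pair]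
  omega

omit [DecidableEq N] in
lemma final_of_top_eq_root (h : ValidInv n c) (hz : Even c.z) (hlen : 2 ≤ c.σ.length)
    (htop : (topI c.σ, topJ c.σ) = (0, n)) : Final n c := by
  obtain ⟨L, i, j, hσ⟩ := exists_eq_append_pair hlen
  simp only [hσ, topI_append_pair, topJ_append_pair, Prod.mk.injEq] at htop
  obtain ⟨rfl, rfl⟩ := htop
  have hL : L = [] := by
    have hsorted := h.sorted
    rw [hσ, List.pairwise_append] at hsorted
    exact List.eq_nil_iff_forall_not_mem.mpr fun x hx =>
      Nat.not_lt_zero x (hsorted.2.2 x hx 0 (by simp))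
  have hstep := h.step_count
  have hz2 : c.z % 2 = 0 := Nat.even_iff.mp hz
  rw [hσ, topJ_append_pair, hL] at hstep
  simp only [List.nil_append, List.length_cons, List.length_nil] at hstep
  exact ⟨by simp [hσ, hL], by omega⟩

end ValidInv

omit [DecidableEq N] in
lemma root_mem_leftSet {n : ℕ} {tG : Finset (N × ℕ × ℕ)} {c : Config N} {X : N}
    (hX : (X, 0, n) ∈ tG) (hz : Even c.z) (h0 : 0 ∈ c.σ)
    (henc : Enc (topI c.σ, topJ c.σ) (0, n)) (hne : (topI c.σ, topJ c.σ) ≠ (0, n)) :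
    (X, 0, n) ∈ leftSet tG c := by
  classical
  rw [leftSet, Finset.mem_filter, if_pos hz]
  exact ⟨hX, ⟨henc, hne⟩, h0⟩

omit [DecidableEq N] in
lemma enc_of_mem_leftSet {tG : Finset (N × ℕ × ℕ)} {c : Config N} {b : N × ℕ × ℕ}
    (hb : b ∈ leftSet tG c) : b ∈ tG ∧ Enc (topI c.σ, topJ c.σ) (span b) := by
  classical
  rw [leftSet, Finset.mem_filter] at hb
  obtain ⟨hbG, henc, -⟩ := hb
  split_ifs at henc
  exacts [⟨hbG, henc.1⟩, ⟨hbG, henc⟩]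

lemma enc_of_common_enc_of_width_le {s s₁ s₂ : ℕ × ℕ} (h₁ : Enc s s₁) (h₂ : Enc s s₂)
    (hcross : Enc s₁ s₂ ∨ Enc s₂ s₁ ∨ s₁.2 ≤ s₂.1 ∨ s₂.2 ≤ s₁.1)
    (hw : s₁.2 - s₁.1 ≤ s₂.2 - s₂.1) : Enc s₁ s₂ := by
  unfold Enc at *
  omega

omit [DecidableEq N] in
lemma exists_isNext {n : ℕ} {tG : Finset (N × ℕ × ℕ)} (hG : IsGold n tG) {c : Config N}
    (hne : (leftSet tG c).Nonempty) : ∃ b, IsNext tG c b := by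
  obtain ⟨b, hb, hmin⟩ := Finset.exists_min_image _ (fun b => (span b).2 - (span b).1) hne
  refine ⟨b, hb, fun b' hb' => ?_⟩
  obtain ⟨hbG, hbenc⟩ := enc_of_mem_leftSet hb
  obtain ⟨hb'G, hb'enc⟩ := enc_of_mem_leftSet hb'
  exact enc_of_common_enc_of_width_le hbenc hb'enc (hG.noncrossing b hbG b' hb'G) (hmin b' hb')

theorem next_well_defined_general (n : ℕ) (tG : Finset (N × ℕ × ℕ))
    (hG : IsGold n tG) (c : Config N) (hc : Valid n c) (hnf : ¬ Final n c)
    (hni : c ≠ initial N) (hz : Even c.z) :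
    (∀ X : N, (X, 0, n) ∈ tG → (X, 0, n) ∈ leftSet tG c) ∧
      ∃ b, IsNext tG c b := by
  have hInv := ValidInv.of_valid hc
  have hlen : 2 ≤ c.σ.length := hInv.initial_or_two_le.resolve_left hni
  have hroot : ∀ X : N, (X, 0, n) ∈ tG → (X, 0, n) ∈ leftSet tG c := fun X hX =>
    root_mem_leftSet hX hz hInv.zero_mem (hInv.top_enc_root hlen)
      fun htop => hnf (hInv.final_of_top_eq_root hz hlen htop)
  obtain ⟨X, hX⟩ := hG.root
  exact ⟨hroot, exists_isNext hG ⟨_, hroot X hX⟩⟩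

/-- Well-definedness of `next(c)`: at every valid, non-final, non-initial
even-step configuration, `left(c)` is nonempty — in particular any gold
bracket with span `(0, n)` belongs to `left(c)` — and hence the `≺`-minimal
element `next(c)` of `left(c)` exists. -/
theorem next_well_defined (n : ℕ) (hn : 1 ≤ n) (tG : Finset (N × ℕ × ℕ))
    (hG : IsGold n tG) (c : Config N) (hc : Valid n c) (hnf : ¬ Final n c)
    (hni : c ≠ initial N) (hz : Even c.z) :
    (∀ X : N, (X, 0, n) ∈ tG → (X, 0, n) ∈ leftSet tG c) ∧
      ∃ b, IsNext tG c b :=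
  next_well_defined_general n tG hG c hc hnf hni hz

end SpanParser
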